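/- arXiv:2012.08635 — 2 statements merged into one kernel-verified Lean document; each statement's English description precedes it below -/
import Mathlib

section
/- Let H be a real Hilbert space, w_R ∈ H, and suppose ν‖w_R‖² + R m(w_R)² = ⟨h, w_R⟩ for a fixed continuous linear functional h, where m is a seminorm, ν > 0, R > 0. If w_R ⇀ 0 weakly in H as R → ∞, then ν‖w_R‖² + R m(w_R)² → 0; in particular ‖w_R‖ → 0 strongly and m(w_R) ≤ C R^{-1/2} for some C and all sufficiently large R. -/
open Filter Topology

/-- Abstract form of Theorem 3.3: if `ν‖w_R‖² + R m(w_R)² = ⟨h, w_R⟩` with `h`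
a fixed continuous linear functional and `w_R ⇀ 0` weakly as `R → ∞`, then
`ν‖w_R‖² + R m(w_R)² → 0`; in particular `‖w_R‖ → 0` strongly and
`m(w_R) ≤ C R^{-1/2}` for some `C` and all sufficiently large `R`. -/
theorem stmt_4 {H : Type*} [NormedAddCommGroup H] [InnerProductSpace ℝ H]
    (ν : ℝ) (hν : 0 < ν) (m : Seminorm ℝ H) (w : ℝ → H) (h : H →L[ℝ] ℝ)
    (hE : ∀ R : ℝ, 0 < R → ν * ‖w R‖ ^ 2 + R * (m (w R)) ^ 2 = h (w R))
    (hweak : ∀ f : H →L[ℝ] ℝ, Tendsto (fun R => f (w R)) atTop (nhds 0)) :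
    Tendsto (fun R => ν * ‖w R‖ ^ 2 + R * (m (w R)) ^ 2) atTop (nhds 0) ∧
    Tendsto (fun R => ‖w R‖) atTop (nhds 0) ∧
    ∃ C : ℝ, ∀ᶠ R in atTop, m (w R) ≤ C / Real.sqrt R := by
  set E : ℝ → ℝ := fun R => ν * ‖w R‖ ^ 2 + R * (m (w R)) ^ 2 with hEdef
  have hEq : ∀ᶠ R in atTop, h (w R) = E R := by
    filter_upwards [eventually_gt_atTop (0 : ℝ)] with R hR
    exact (hE R hR).symm
  have hE0 : Tendsto E atTop (nhds 0) := (hweak h).congr' hEq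
  have hle : ∀ᶠ R in atTop, ν * ‖w R‖ ^ 2 ≤ E R := by
    filter_upwards [eventually_gt_atTop (0 : ℝ)] with R hR
    have : 0 ≤ R * (m (w R)) ^ 2 := mul_nonneg hR.le (sq_nonneg _)
    simp only [hEdef]; linarith
  have hge : ∀ᶠ R in atTop, (0 : ℝ) ≤ ν * ‖w R‖ ^ 2 := by
    filter_upwards with R
    exact mul_nonneg hν.le (sq_nonneg _)
  have hnsq : Tendsto (fun R => ν * ‖w R‖ ^ 2) atTop (nhds 0) :=
    tendsto_of_tendsto_of_tendsto_of_le_of_le' tendsto_const_nhds hE0 hge hle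
  have hsq : Tendsto (fun R => ‖w R‖ ^ 2) atTop (nhds 0) := by
    have := hnsq.const_mul (ν⁻¹)
    simpa [← mul_assoc, inv_mul_cancel₀ hν.ne'] using this
  have hnorm : Tendsto (fun R => ‖w R‖) atTop (nhds 0) := by
    have h1 : Tendsto (fun R => Real.sqrt (‖w R‖ ^ 2)) atTop (nhds 0) := by
      have := (Real.continuous_sqrt.tendsto 0).comp hsq
      simpa [Function.comp_def] using this
    exact h1.congr fun R => Real.sqrt_sq (norm_nonneg _)
  refine ⟨hE0, hnorm, 1, ?_⟩
  have hlt1 : ∀ᶠ R in atTop, E R < 1 := hE0.eventually (gt_mem_nhds one_pos)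
  filter_upwards [hlt1, eventually_gt_atTop (0 : ℝ)] with R hR1 hRpos
  have hmsq : (m (w R)) ^ 2 ≤ 1 / R := by
    have h0 : 0 ≤ ν * ‖w R‖ ^ 2 := mul_nonneg hν.le (sq_nonneg _)
    have : R * (m (w R)) ^ 2 ≤ 1 := by simp only [hEdef] at hR1; linarith
    rw [le_div_iff₀ hRpos]; linarith [this]
  have : m (w R) ≤ Real.sqrt (1 / R) := by
    have := Real.sqrt_le_sqrt hmsq
    rwa [Real.sqrt_sq (apply_nonneg m _)] at this
  calc m (w R) ≤ Real.sqrt (1 / R) := this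
    _ = 1 / Real.sqrt R := by rw [one_div, Real.sqrt_inv, one_div]
end

section
/- Suppose for each R > 0 the nonnegative numbers A_R, B_R satisfy ν A_R² + R B_R² ≤ c₀ |⟨h, w_R⟩| where w_R ⇀ 0 weakly in a Hilbert space V, h ∈ V′, and |⟨h, w_R⟩| ≤ ‖h‖_{V′} ‖w_R‖_V with ‖w_R‖_V² ≤ c₁(A_R² + B_R²). Then both A_R → 0 and √R · B_R remains bounded; moreover B_R ≤ c₂ R^{-1/2} for some constant c₂ and all R ≥ 1. -/
open Filter Topology

/-- Composite statement formalizing Theorems 3.3 / 4.7: from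
`ν A_R² + R B_R² ≤ c₀ |⟨h, w_R⟩|` with `w_R ⇀ 0` weakly, `h` fixed,
`|⟨h, w_R⟩| ≤ ‖h‖ ‖w_R‖` and `‖w_R‖² ≤ c₁(A_R² + B_R²)`, one gets `A_R → 0`
and `√R · B_R` bounded, in particular `B_R ≤ c₂ R^{-1/2}` for all `R ≥ 1`. -/
theorem stmt_15 {V : Type*} [NormedAddCommGroup V] [InnerProductSpace ℝ V]
    (ν c₀ c₁ : ℝ) (hν : 0 < ν) (hc₀ : 0 < c₀) (hc₁ : 0 < c₁)
    (A B : ℝ → ℝ) (hA : ∀ R, 0 ≤ A R) (hB : ∀ R, 0 ≤ B R)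
    (w : ℝ → V) (h : V →L[ℝ] ℝ)
    (hE : ∀ R : ℝ, 0 < R → ν * (A R) ^ 2 + R * (B R) ^ 2 ≤ c₀ * |h (w R)|)
    (hweak : ∀ f : V →L[ℝ] ℝ, Tendsto (fun R => f (w R)) atTop (nhds 0))
    (hdual : ∀ R : ℝ, |h (w R)| ≤ ‖h‖ * ‖w R‖)
    (hnorm : ∀ R : ℝ, ‖w R‖ ^ 2 ≤ c₁ * ((A R) ^ 2 + (B R) ^ 2)) :
    Tendsto A atTop (nhds 0) ∧
    ∃ c₂ : ℝ, ∀ R : ℝ, 1 ≤ R → Real.sqrt R * B R ≤ c₂ ∧ B R ≤ c₂ / Real.sqrt R := by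
  have hm : (0:ℝ) < min ν 1 := lt_min hν one_pos
  set m := min ν 1 with hmdef
  set K := c₀ * ‖h‖ * Real.sqrt c₁ with hKdef
  have hK : 0 ≤ K := by positivity
  constructor
  · -- A → 0
    have h0 : Tendsto (fun R => c₀ * |h (w R)| / ν) atTop (nhds 0) := by
      have h1 := (hweak h).abs
      have h2 := (h1.const_mul c₀).div_const ν
      simpa using h2
    have hA2 : Tendsto (fun R => (A R) ^ 2) atTop (nhds 0) := by
      refine squeeze_zero' (Eventually.of_forall fun R => sq_nonneg _) ?_ h0
      filter_upwards [eventually_gt_atTop (0:ℝ)] with R hR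
      have hE' := hE R hR
      rw [le_div_iff₀ hν]
      nlinarith [mul_nonneg hR.le (sq_nonneg (B R))]
    have h3 : Tendsto (fun R => Real.sqrt ((A R) ^ 2)) atTop (nhds (Real.sqrt 0)) :=
      (Real.continuous_sqrt.tendsto 0).comp hA2
    have h4 : (fun R => Real.sqrt ((A R) ^ 2)) = A := by
      funext R; exact Real.sqrt_sq (hA R)
    rw [h4, Real.sqrt_zero] at h3
    exact h3
  · refine ⟨K / Real.sqrt m, fun R hR => ?_⟩
    have hRpos : (0:ℝ) < R := lt_of_lt_of_le one_pos hR
    set s := Real.sqrt ((A R) ^ 2 + (B R) ^ 2) with hsdef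
    have hs : 0 ≤ s := Real.sqrt_nonneg _
    have hs2 : s ^ 2 = (A R) ^ 2 + (B R) ^ 2 := Real.sq_sqrt (by positivity)
    have hws : ‖w R‖ ≤ Real.sqrt c₁ * s := by
      have h1 : ‖w R‖ ≤ Real.sqrt (c₁ * ((A R) ^ 2 + (B R) ^ 2)) := by
        rw [← Real.sqrt_sq (norm_nonneg (w R))]
        exact Real.sqrt_le_sqrt (hnorm R)
      rwa [Real.sqrt_mul hc₁.le] at h1
    have hE' : ν * (A R) ^ 2 + R * (B R) ^ 2 ≤ K * s := by
      calc ν * (A R) ^ 2 + R * (B R) ^ 2 ≤ c₀ * |h (w R)| := hE R hRpos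
        _ ≤ c₀ * (‖h‖ * ‖w R‖) := by
            exact mul_le_mul_of_nonneg_left (hdual R) hc₀.le
        _ ≤ c₀ * (‖h‖ * (Real.sqrt c₁ * s)) := by
            have := mul_le_mul_of_nonneg_left hws (norm_nonneg h)
            exact mul_le_mul_of_nonneg_left this hc₀.le
        _ = K * s := by rw [hKdef]; ring
    have hms2 : m * s ^ 2 ≤ K * s := by
      rw [hs2]
      have h1 : m ≤ ν := min_le_left _ _
      have h2 : m ≤ R := le_trans (min_le_right _ _) hR
      nlinarith [sq_nonneg (A R), sq_nonneg (B R)]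
    have hms : m * s ≤ K := by
      rcases eq_or_lt_of_le hs with h1 | h1
      · simp [← h1, hK]
      · have : (m * s) * s ≤ K * s := by nlinarith
        exact le_of_mul_le_mul_right this h1
    have hsK : s ≤ K / m := (le_div_iff₀ hm).2 (by linarith [hms])
    have hRB : R * (B R) ^ 2 ≤ K ^ 2 / m := by
      have h1 : K * s ≤ K * (K / m) := mul_le_mul_of_nonneg_left hsK hK
      have h2 : K * (K / m) = K ^ 2 / m := by ring
      nlinarith [mul_nonneg hν.le (sq_nonneg (A R))]
    have key : (Real.sqrt R * B R) ^ 2 ≤ (K / Real.sqrt m) ^ 2 := by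
      rw [mul_pow, Real.sq_sqrt hRpos.le, div_pow, Real.sq_sqrt hm.le]
      exact hRB
    have hsqrtR : 0 < Real.sqrt R := Real.sqrt_pos.2 hRpos
    have hc2 : Real.sqrt R * B R ≤ K / Real.sqrt m := by
      have h1 := Real.sqrt_le_sqrt key
      rwa [Real.sqrt_sq (mul_nonneg hsqrtR.le (hB R)), Real.sqrt_sq (div_nonneg hK (Real.sqrt_nonneg _))] at h1
    refine ⟨hc2, ?_⟩
    rw [le_div_iff₀ hsqrtR]
    linarith [mul_comm (B R) (Real.sqrt R)]
end
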